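/- arXiv:1210.8092 — 2 statements merged into one kernel-verified Lean document; each statement's English description precedes it below -/
import Mathlib

section
/- Let (D, ∘, •) be such that ∘ has a neutral element e_∘ and define the extended domain D̂ = D × Bool with operations ∘̂((d1,s1),...,(dk,sk)) = (∘(d1⊗s1,...,dk⊗sk), s1 ∨ ... ∨ sk) and •̂((d1,s1),...,(dk,sk)) = (•(d1⊗s1,...,dk⊗sk), s1 ∧ ... ∧ sk), where d⊗1 = d and d⊗0 = e_∘. Then the second component of the bottom-up evaluation of the extended attribute domain (D̂, ∘̂, •̂, •̂, ∘̂, •̂, ∘̂) with extended basic assignment β̂(b) = (β(b), 1) for proponent actions and β̂(b) = (β(b), 0) for opponent actions, equals the value of the sat_owner attribute (for owner = p) on every ADTerm. -/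
/-- Attack--defense terms over a set `B` of basic-action names.  Each node
    carries a type tag `s : Bool`: `true` is the proponent's type, `false` the
    opponent's.  Unranked refinements are represented by a head term plus a
    list of further arguments (so every refinement has at least one argument). -/
inductive ADTerm (B : Type) : Type where
  | basic (s : Bool) (b : B) : ADTerm B
  | disj (s : Bool) (t : ADTerm B) (ts : List (ADTerm B)) : ADTerm B
  | conj (s : Bool) (t : ADTerm B) (ts : List (ADTerm B)) : ADTerm B
  | cnt  (s : Bool) (t : ADTerm B) (u : ADTerm B) : ADTerm B

/-- The type (head-symbol type) of an ADTerm. -/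
def ADTerm.typ {B : Type} : ADTerm B → Bool
  | .basic s _ => s | .disj s _ _ => s | .conj s _ _ => s | .cnt s _ _ => s

/-- Well-typedness: refining children have the same type as their parent, and a
    countermeasure has the opposite type. -/
inductive ADTerm.WT {B : Type} : ADTerm B → Prop
  | basic (s : Bool) (b : B) : WT (.basic s b)
  | disj (s : Bool) (t : ADTerm B) (ts : List (ADTerm B)) :
      t.typ = s → WT t → (∀ u ∈ ts, u.typ = s) → (∀ u ∈ ts, WT u) → WT (.disj s t ts)
  | conj (s : Bool) (t : ADTerm B) (ts : List (ADTerm B)) :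
      t.typ = s → WT t → (∀ u ∈ ts, u.typ = s) → (∀ u ∈ ts, WT u) → WT (.conj s t ts)
  | cnt (s : Bool) (t u : ADTerm B) :
      t.typ = s → u.typ = !s → WT t → WT u → WT (.cnt s t u)

/-- An attribute domain `(D, ∨ᵖ, ∧ᵖ, ∨ᵒ, ∧ᵒ, cᵖ, cᵒ)`; unranked operations are
    obtained by folding the binary ones. -/
structure AttrDom (D : Type) where
  orP : D → D → D
  andP : D → D → D
  orO : D → D → D
  andO : D → D → D
  cntP : D → D → D
  cntO : D → D → D

/-- Bottom-up evaluation of an attribute on an ADTerm, given a basic assignment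
    `β` (which may depend on the type of the basic action). -/
def AttrDom.eval {B D : Type} (A : AttrDom D) (β : Bool → B → D) : ADTerm B → D
  | .basic s b => β s b
  | .disj s t ts =>
      (ts.attach.map (fun u => A.eval β u.1)).foldl (if s then A.orP else A.orO) (A.eval β t)
  | .conj s t ts =>
      (ts.attach.map (fun u => A.eval β u.1)).foldl (if s then A.andP else A.andO) (A.eval β t)
  | .cnt s t u => (if s then A.cntP else A.cntO) (A.eval β t) (A.eval β u)
  termination_by t => sizeOf t
  decreasing_by all_goals simp_wf <;> first
    | (have := List.sizeOf_lt_of_mem u.2; omega)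
    | omega

/-- The satisfiability attribute domain `({0,1}, ∨, ∧, ∨, ∧, ⋆, ⋆)`,
    `⋆(x,y) = x ∧ ¬y`. -/
def satDom : AttrDom Bool :=
  ⟨(· || ·), (· && ·), (· || ·), (· && ·), fun x y => x && !y, fun x y => x && !y⟩

/-- The `sat_owner` attribute domain for owner = proponent:
    `({0,1}, ∨, ∧, ∧, ∨, ∧, ∨)`. -/
def satPDom : AttrDom Bool :=
  ⟨(· || ·), (· && ·), (· && ·), (· || ·), (· && ·), (· || ·)⟩

/-- Basic assignment for `sat_owner` with owner = proponent: `1` on proponent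
    basic actions, `0` on opponent basic actions. -/
def satPAssign {B : Type} : Bool → B → Bool := fun s _ => s

/-- `d ⊗ 1 = d`, `d ⊗ 0 = e`. -/
def otimes {D : Type} (e : D) (d : D) (f : Bool) : D := if f then d else e

/-- Extension of a binary operation to `D × Bool`, combining the Boolean flags
    with `flagOp`. -/
def extOp {D : Type} (op : D → D → D) (e : D) (flagOp : Bool → Bool → Bool) :
    D × Bool → D × Bool → D × Bool :=
  fun x y => (op (otimes e x.1 x.2) (otimes e y.1 y.2), flagOp x.2 y.2)

/-- The extended attribute domain `(D̂, ∘̂, •̂, •̂, ∘̂, •̂, ∘̂)` built from a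
    Class 1 (proponent-owned) domain `(D, ∘, •, •, ∘, •, ∘)` with `e` the
    neutral element of `∘`; the flags of `∘̂` combine by `∨` and those of `•̂`
    by `∧`. -/
def extDom {D : Type} (circ bull : D → D → D) (e : D) : AttrDom (D × Bool) where
  orP := extOp circ e (· || ·)
  andP := extOp bull e (· && ·)
  orO := extOp bull e (· && ·)
  andO := extOp circ e (· || ·)
  cntP := extOp bull e (· && ·)
  cntO := extOp circ e (· || ·)

/-- The Class 1 attribute domain template `(D, ∘, •, •, ∘, •, ∘)` for a
    proponent-owned question. -/
def plainDom {D : Type} (circ bull : D → D → D) : AttrDom D :=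
  ⟨circ, bull, bull, circ, bull, circ⟩


private lemma foldl_extOp_snd {D : Type} (op : D → D → D) (e : D)
    (g : Bool → Bool → Bool) :
    ∀ (l : List (D × Bool)) (x : D × Bool),
      (l.foldl (extOp op e g) x).2 = (l.map Prod.snd).foldl g x.2 := by
  intro l
  induction l with
  | nil => intro x; rfl
  | cons a l ih => intro x; simp [List.foldl, ih, extOp]

private lemma stmt5_aux {B D : Type} (circ bull : D → D → D) (e : D)
    (β : Bool → B → D) :
    ∀ (n : ℕ) (t : ADTerm B), sizeOf t ≤ n →
    ((extDom circ bull e).eval (fun s b => (β s b, s)) t).2 =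
      satPDom.eval satPAssign t := by
  intro n
  induction n with
  | zero => intro t ht; cases t <;> simp at ht
  | succ n ih =>
    intro t ht
    cases t with
    | basic s b => simp [AttrDom.eval, satPAssign]
    | disj s t ts =>
      have hts : ∀ u ∈ ts, sizeOf u ≤ n := by
        intro u hu; have := List.sizeOf_lt_of_mem hu; simp at ht ⊢; omega
      have iht := ih t (by simp at ht; omega)
      have ihts : ∀ u ∈ ts,
          ((extDom circ bull e).eval (fun s b => (β s b, s)) u).2 =
            satPDom.eval satPAssign u := fun u hu => ih u (hts u hu)
      rw [AttrDom.eval, AttrDom.eval]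
      cases s <;>
        simp only [extDom, satPDom, if_true, if_false, Bool.false_eq_true]
          at iht ihts ⊢ <;>
        rw [foldl_extOp_snd, iht] <;>
        · congr 1
          simp only [List.map_map]
          apply List.map_congr_left
          intro u hu
          exact ihts u.1 u.2
    | conj s t ts =>
      have hts : ∀ u ∈ ts, sizeOf u ≤ n := by
        intro u hu; have := List.sizeOf_lt_of_mem hu; simp at ht ⊢; omega
      have iht := ih t (by simp at ht; omega)
      have ihts : ∀ u ∈ ts,
          ((extDom circ bull e).eval (fun s b => (β s b, s)) u).2 =
            satPDom.eval satPAssign u := fun u hu => ih u (hts u hu)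
      rw [AttrDom.eval, AttrDom.eval]
      cases s <;>
        simp only [extDom, satPDom, if_true, if_false, Bool.false_eq_true]
          at iht ihts ⊢ <;>
        rw [foldl_extOp_snd, iht] <;>
        · congr 1
          simp only [List.map_map]
          apply List.map_congr_left
          intro u hu
          exact ihts u.1 u.2
    | cnt s t u =>
      have iht := ih t (by simp at ht; omega)
      have ihu := ih u (by simp at ht; omega)
      rw [AttrDom.eval, AttrDom.eval]
      cases s <;>
        simp only [extDom, satPDom, extOp, if_true, if_false,
          Bool.false_eq_true] at iht ihu ⊢ <;>
        rw [iht, ihu]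

/-- The second component of the extended-domain evaluation equals the value of
    the `sat_owner` attribute (owner = proponent) on every ADTerm. -/
theorem stmt5 {B D : Type} (circ bull : D → D → D) (e : D)
    (he : ∀ d : D, circ e d = d ∧ circ d e = d)
    (β : Bool → B → D) (t : ADTerm B) (hWT : t.WT) :
    ((extDom circ bull e).eval (fun s b => (β s b, s)) t).2 =
      satPDom.eval satPAssign t := stmt5_aux circ bull e β (sizeOf t) t le_rfl
end

section
/- If the structure (D, ∘, •) is a commutative semiring in which the neutral element e_∘ of ∘ is absorbing for • (i.e., e_∘ • d = d • e_∘ = e_∘ for all d), then for every ADTerm t, the first component of the extended evaluation α̂(t) (using D̂ = D × Bool as in the merging construction) equals the plain bottom-up evaluation of t with domain (D, ∘, •, •, ∘, •, ∘) and the basic assignment that maps proponent basic actions b to β(b) and all opponent basic actions to e_∘, whenever the second component of α̂(t) is 1. -/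
section Aux

variable {B D : Type} (circ bull : D → D → D) (e : D)

lemma extDom_orP : (extDom circ bull e).orP = extOp circ e (· || ·) := rfl
lemma extDom_andP : (extDom circ bull e).andP = extOp bull e (· && ·) := rfl
lemma extDom_orO : (extDom circ bull e).orO = extOp bull e (· && ·) := rfl
lemma extDom_andO : (extDom circ bull e).andO = extOp circ e (· || ·) := rfl
lemma extDom_cntP : (extDom circ bull e).cntP = extOp bull e (· && ·) := rfl
lemma extDom_cntO : (extDom circ bull e).cntO = extOp circ e (· || ·) := rfl
lemma plainDom_orP : (plainDom circ bull).orP = circ := rfl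
lemma plainDom_andP : (plainDom circ bull).andP = bull := rfl
lemma plainDom_orO : (plainDom circ bull).orO = bull := rfl
lemma plainDom_andO : (plainDom circ bull).andO = circ := rfl
lemma plainDom_cntP : (plainDom circ bull).cntP = bull := rfl
lemma plainDom_cntO : (plainDom circ bull).cntO = circ := rfl

lemma homCirc (hce : ∀ d : D, circ e d = d) (x y : D × Bool) :
    otimes e (extOp circ e (· || ·) x y).1 (extOp circ e (· || ·) x y).2
      = circ (otimes e x.1 x.2) (otimes e y.1 y.2) := by
  rcases x with ⟨x1, fx⟩; rcases y with ⟨y1, fy⟩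
  cases fx <;> cases fy <;> simp [extOp, otimes, hce]

lemma homBull (habs : ∀ d : D, bull e d = e ∧ bull d e = e) (x y : D × Bool) :
    otimes e (extOp bull e (· && ·) x y).1 (extOp bull e (· && ·) x y).2
      = bull (otimes e x.1 x.2) (otimes e y.1 y.2) := by
  rcases x with ⟨x1, fx⟩; rcases y with ⟨y1, fy⟩
  cases fx <;> cases fy <;> simp [extOp, otimes, (habs _).1, (habs _).2]

lemma foldlCirc (hce : ∀ d : D, circ e d = d) :
    ∀ (l : List (D × Bool)) (init : D × Bool),
      otimes e (l.foldl (extOp circ e (· || ·)) init).1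
          (l.foldl (extOp circ e (· || ·)) init).2
        = (l.map (fun z => otimes e z.1 z.2)).foldl circ (otimes e init.1 init.2)
  | [], _ => rfl
  | a :: l, init => by
      simp only [List.foldl, List.map]
      rw [foldlCirc hce l, homCirc circ e hce]

lemma foldlBull (habs : ∀ d : D, bull e d = e ∧ bull d e = e) :
    ∀ (l : List (D × Bool)) (init : D × Bool),
      otimes e (l.foldl (extOp bull e (· && ·)) init).1
          (l.foldl (extOp bull e (· && ·)) init).2
        = (l.map (fun z => otimes e z.1 z.2)).foldl bull (otimes e init.1 init.2)
  | [], _ => rfl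
  | a :: l, init => by
      simp only [List.foldl, List.map]
      rw [foldlBull habs l, homBull bull e habs]

theorem key_lemma (hce : ∀ d : D, circ e d = d)
    (habs : ∀ d : D, bull e d = e ∧ bull d e = e) (β : Bool → B → D) :
    ∀ t : ADTerm B,
      otimes e ((extDom circ bull e).eval (fun s b => (β s b, s)) t).1
        ((extDom circ bull e).eval (fun s b => (β s b, s)) t).2
        = (plainDom circ bull).eval (fun s b => if s then β s b else e) t
  | .basic s b => by cases s <;> simp [AttrDom.eval, otimes]
  | .disj s t ts => by
      have ih := key_lemma hce habs β t
      have ihs : ∀ u ∈ ts.attach,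
          otimes e ((extDom circ bull e).eval (fun s b => (β s b, s)) u.1).1
            ((extDom circ bull e).eval (fun s b => (β s b, s)) u.1).2
            = (plainDom circ bull).eval (fun s b => if s then β s b else e) u.1 := by
        intro u _
        have := List.sizeOf_lt_of_mem u.2
        exact key_lemma hce habs β u.1
      simp only [AttrDom.eval]
      cases s <;>
        simp only [Bool.false_eq_true, reduceIte, extDom_orP, extDom_orO,
          plainDom_orP, plainDom_orO]
      · rw [foldlBull bull e habs, ih, List.map_map]
        congr 1
        refine List.map_congr_left fun u hu => ?_
        simpa using ihs u hu
      · rw [foldlCirc circ e hce, ih, List.map_map]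
        congr 1
        refine List.map_congr_left fun u hu => ?_
        simpa using ihs u hu
  | .conj s t ts => by
      have ih := key_lemma hce habs β t
      have ihs : ∀ u ∈ ts.attach,
          otimes e ((extDom circ bull e).eval (fun s b => (β s b, s)) u.1).1
            ((extDom circ bull e).eval (fun s b => (β s b, s)) u.1).2
            = (plainDom circ bull).eval (fun s b => if s then β s b else e) u.1 := by
        intro u _
        have := List.sizeOf_lt_of_mem u.2
        exact key_lemma hce habs β u.1
      simp only [AttrDom.eval]
      cases s <;>
        simp only [Bool.false_eq_true, reduceIte, extDom_andP, extDom_andO,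
          plainDom_andP, plainDom_andO]
      · rw [foldlCirc circ e hce, ih, List.map_map]
        congr 1
        refine List.map_congr_left fun u hu => ?_
        simpa using ihs u hu
      · rw [foldlBull bull e habs, ih, List.map_map]
        congr 1
        refine List.map_congr_left fun u hu => ?_
        simpa using ihs u hu
  | .cnt s t u => by
      have ih1 := key_lemma hce habs β t
      have ih2 := key_lemma hce habs β u
      simp only [AttrDom.eval]
      cases s <;>
        simp only [Bool.false_eq_true, reduceIte, extDom_cntP, extDom_cntO,
          plainDom_cntP, plainDom_cntO]
      · rw [homCirc circ e hce, ih1, ih2]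
      · rw [homBull bull e habs, ih1, ih2]
  termination_by t => sizeOf t
  decreasing_by all_goals simp_wf <;> omega

end Aux

/-- If `(D, ∘, •)` is a commutative semiring in which the neutral element `e`
    of `∘` is absorbing for `•`, then (whenever the flag is `1`) the first
    component of the extended evaluation equals the plain evaluation with
    opponent basic actions assigned `e`. -/
theorem stmt7 {B D : Type} (circ bull : D → D → D) (e one : D)
    (hcc : ∀ a b : D, circ a b = circ b a)
    (hca : ∀ a b c : D, circ (circ a b) c = circ a (circ b c))
    (hce : ∀ d : D, circ e d = d)
    (hbc : ∀ a b : D, bull a b = bull b a)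
    (hba : ∀ a b c : D, bull (bull a b) c = bull a (bull b c))
    (hbone : ∀ d : D, bull one d = d)
    (hdist : ∀ a b c : D, bull a (circ b c) = circ (bull a b) (bull a c))
    (habs : ∀ d : D, bull e d = e ∧ bull d e = e)
    (β : Bool → B → D) (t : ADTerm B) (hWT : t.WT)
    (h2 : ((extDom circ bull e).eval (fun s b => (β s b, s)) t).2 = true) :
    ((extDom circ bull e).eval (fun s b => (β s b, s)) t).1 =
      (plainDom circ bull).eval (fun s b => if s then β s b else e) t := by
  have := key_lemma circ bull e hce habs β t
  rw [h2] at this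
  simpa [otimes] using this
end
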